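/- arXiv:2603.27736 — 3 statements merged into one kernel-verified Lean document; each statement's English description precedes it below -/
import Mathlib

section
/- Select-plus rank is submultiplicative under entrywise addition: for any two n × m matrices A₁, A₂ with entries in ℤ ∪ {⊥}, the select-plus rank of the entrywise sum A₁ + A₂ satisfies r(A₁ + A₂) ≤ r(A₁) · r(A₂), where the sum of any entry with ⊥ is ⊥. -/
/-- A select-plus rank-`r` decomposition of a matrix with entries in `ℤ ∪ {⊥}`
(`⊥` modelled as `none`). -/
def SelectPlusDecomp {n m : ℕ} (A : Fin n → Fin m → Option ℤ) (r : ℕ) : Prop :=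
  ∃ (U : Fin n → Fin r → ℤ) (V : Fin r → Fin m → ℤ),
    ∀ i j, A i j = none ∨ ∃ k, A i j = some (U i k + V k j)

/-- The select-plus rank: the smallest `r ≥ 0` admitting a decomposition. -/
noncomputable def selectPlusRank {n m : ℕ} (A : Fin n → Fin m → Option ℤ) : ℕ :=
  sInf {r | SelectPlusDecomp A r}

/-- Addition on `ℤ ∪ {⊥}` with the convention `x + ⊥ = ⊥ + x = ⊥`. -/
def optAdd : Option ℤ → Option ℤ → Option ℤ
  | some x, some y => some (x + y)
  | _, _ => none

lemma selectPlusDecomp_exists {n m : ℕ} (A : Fin n → Fin m → Option ℤ) :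
    SelectPlusDecomp A m := by
  refine ⟨fun i k => ((A i k).getD 0), fun _ _ => 0, fun i j => ?_⟩
  cases h : A i j with
  | none => exact Or.inl rfl
  | some x => exact Or.inr ⟨j, by simp [h]⟩

/-- Submultiplicativity of the select-plus rank under entrywise addition. -/
theorem selectPlusRank_add_le {n m : ℕ} (A₁ A₂ : Fin n → Fin m → Option ℤ) :
    selectPlusRank (fun i j => optAdd (A₁ i j) (A₂ i j)) ≤
      selectPlusRank A₁ * selectPlusRank A₂ := by
  have h₁ : SelectPlusDecomp A₁ (selectPlusRank A₁) :=
    Nat.sInf_mem (s := {r | SelectPlusDecomp A₁ r}) ⟨m, selectPlusDecomp_exists A₁⟩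
  have h₂ : SelectPlusDecomp A₂ (selectPlusRank A₂) :=
    Nat.sInf_mem (s := {r | SelectPlusDecomp A₂ r}) ⟨m, selectPlusDecomp_exists A₂⟩
  obtain ⟨U₁, V₁, hU₁⟩ := h₁
  obtain ⟨U₂, V₂, hU₂⟩ := h₂
  apply Nat.sInf_le
  refine ⟨fun i k => U₁ i (finProdFinEquiv.symm k).1 + U₂ i (finProdFinEquiv.symm k).2,
    fun k j => V₁ (finProdFinEquiv.symm k).1 j + V₂ (finProdFinEquiv.symm k).2 j,
    fun i j => ?_⟩
  rcases hU₁ i j with h1 | ⟨k₁, h1⟩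
  · left; simp [h1, optAdd]
  rcases hU₂ i j with h2 | ⟨k₂, h2⟩
  · left; simp [h1, h2, optAdd]
  · right
    refine ⟨finProdFinEquiv (k₁, k₂), ?_⟩
    simp [h1, h2, optAdd]
    ring
end

section
/- Let X, Y be finite sets of integers with doubling |X + X| ≤ K·|X| and |Y + Y| ≤ K·|Y|, where K ≥ 1 and X, Y are nonempty. Then the sumset Z = X + Y has doubling |Z + Z| ≤ K⁸·|Z|. -/
/-!
Write `2X + 2Y` for `(X + Y) + (X + Y)`. Plünnecke–Ruzsa turns doubling `K` into tripling
`K ^ 3`, and Ruzsa's triangle inequality through `B` gives `|A + 2B| |B| ≤ |A + B| |3B|`.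
Applied with `B = X` and then `B = Y` this yields `|2X + 2Y| ≤ K ^ 3 |X + 2Y| ≤ K ^ 6 |X + Y|`.
-/

open Pointwise

namespace Finset

variable {G : Type*} [AddCommGroup G] [DecidableEq G]

theorem card_nsmul_le_pow_mul_card {A : Finset G} (hA : A.Nonempty) {K : ℝ}
    (hAA : (#(A + A) : ℝ) ≤ K * #A) (n : ℕ) : (#(n • A) : ℝ) ≤ K ^ n * #A := by
  have hA₀ : (0 : ℝ) < #A := mod_cast hA.card_pos
  have hratio : (#(A + A) / #A : ℝ) ≤ K := (div_le_iff₀ hA₀).2 hAA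
  have hPR : (#(n • A) : ℝ) ≤ (#(A + A) / #A : ℝ) ^ n * #A := by
    have h := NNRat.cast_le (K := ℝ) |>.2 (pluennecke_ruzsa_inequality_nsmul_add hA A n)
    push_cast at h
    exact h
  calc (#(n • A) : ℝ) ≤ (#(A + A) / #A : ℝ) ^ n * #A := hPR
    _ ≤ K ^ n * #A := by gcongr

theorem card_add_add_self_le_pow_three_mul {B : Finset G} (hB : B.Nonempty) {K : ℝ}
    (hBB : (#(B + B) : ℝ) ≤ K * #B) (A : Finset G) :
    (#(A + (B + B)) : ℝ) ≤ K ^ 3 * #(A + B) := by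
  have hB₀ : (0 : ℝ) < #B := mod_cast hB.card_pos
  have htriangle : (#(A + (B + B)) * #B : ℝ) ≤ #(A + B) * #(B + (B + B)) :=
    mod_cast ruzsa_triangle_inequality_add_add_add A B (B + B)
  have htriple : (#(B + (B + B)) : ℝ) ≤ K ^ 3 * #B := by
    simpa only [succ_nsmul, zero_nsmul, zero_add, add_assoc] using
      card_nsmul_le_pow_mul_card hB hBB 3
  refine le_of_mul_le_mul_right ?_ hB₀
  calc (#(A + (B + B)) * #B : ℝ) ≤ #(A + B) * #(B + (B + B)) := htriangle
    _ ≤ #(A + B) * (K ^ 3 * #B) := by gcongr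
    _ = K ^ 3 * #(A + B) * #B := by ring

end Finset

/-- If `X` and `Y` are nonempty finite sets of integers with doubling at most `K`,
then the sumset `X + Y` has doubling at most `K^8`. -/
theorem doubling_of_sumset (X Y : Finset ℤ) (hX : X.Nonempty) (hY : Y.Nonempty)
    (K : ℝ) (hK : 1 ≤ K)
    (hXd : ((X + X).card : ℝ) ≤ K * X.card)
    (hYd : ((Y + Y).card : ℝ) ≤ K * Y.card) :
    (((X + Y) + (X + Y)).card : ℝ) ≤ K ^ 8 * (X + Y).card := by
  calc (((X + Y) + (X + Y)).card : ℝ) = ((Y + Y) + (X + X)).card := by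
        rw [add_add_add_comm, add_comm]
    _ ≤ K ^ 3 * ((Y + Y) + X).card := Finset.card_add_add_self_le_pow_three_mul hX hXd _
    _ = K ^ 3 * (X + (Y + Y)).card := by rw [add_comm]
    _ ≤ K ^ 3 * (K ^ 3 * (X + Y).card) := by
        gcongr; exact Finset.card_add_add_self_le_pow_three_mul hY hYd X
    _ = K ^ 6 * (X + Y).card := by ring
    _ ≤ K ^ 8 * (X + Y).card := by gcongr; norm_num
end

section
/- Three-layer graph encodes min-plus product: let A, B be n×n matrices with entries in {0, …, u−1} ∪ {⊥}. Construct an undirected graph on vertex sets I ⊔ K ⊔ J, each a copy of [n], with an edge {i, k} ∈ I×K of weight A[i,k] + u whenever A[i,k] ≠ ⊥, and an edge {k, j} ∈ K×J of weight B[k,j] + u whenever B[k,j] ≠ ⊥ (and no other edges). Then for every (i,j) ∈ I×J with (A∗B)[i,j] ≠ ⊥, the graph distance between i ∈ I and j ∈ J equals (A∗B)[i,j] + 2u, where (A∗B)[i,j] = min_k (A[i,k] + B[k,j]) is the min-plus product. -/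
/-- Weighted walks: `Reaches W a v c` means there is a walk from `a` to `v` of total
weight `c` in the graph with (optional) edge weights `W`. -/
inductive Reaches {V : Type} (W : V → V → Option ℤ) : V → V → ℤ → Prop
  | refl (v : V) : Reaches W v v 0
  | step {a b v : V} {c d : ℤ} : W a b = some c → Reaches W b v d →
      Reaches W a v (c + d)

/-- The symmetric edge weights of the three-layer graph on `I ⊔ K ⊔ J`: an edge
`{i, k}` of weight `A[i,k] + u` whenever `A[i,k] ≠ ⊥`, and an edge `{k, j}` of
weight `B[k,j] + u` whenever `B[k,j] ≠ ⊥`; no other edges. -/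
def layerWeight {n : ℕ} (A B : Fin n → Fin n → Option ℤ) (u : ℤ) :
    (Fin n ⊕ Fin n ⊕ Fin n) → (Fin n ⊕ Fin n ⊕ Fin n) → Option ℤ
  | Sum.inl i, Sum.inr (Sum.inl k) => (A i k).map (· + u)
  | Sum.inr (Sum.inl k), Sum.inl i => (A i k).map (· + u)
  | Sum.inr (Sum.inl k), Sum.inr (Sum.inr j) => (B k j).map (· + u)
  | Sum.inr (Sum.inr j), Sum.inr (Sum.inl k) => (B k j).map (· + u)
  | _, _ => none

/-- Three-layer graph encodes the min-plus product: if `A, B` have entries in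
`{0, …, u−1} ∪ {⊥}` and `(A∗B)[i,j] = m` (i.e. `m` is the least value `a + b` over
`k` with `A[i,k] = a ≠ ⊥` and `B[k,j] = b ≠ ⊥`), then the distance from `i ∈ I` to
`j ∈ J` in the weighted graph — the least weight of a walk — equals `m + 2u`. -/
theorem three_layer_graph_min_plus {n : ℕ} (A B : Fin n → Fin n → Option ℤ)
    (u : ℤ) (hu : 1 ≤ u)
    (hA : ∀ i k x, A i k = some x → 0 ≤ x ∧ x < u)
    (hB : ∀ k j x, B k j = some x → 0 ≤ x ∧ x < u)
    (i j : Fin n) (m : ℤ)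
    (hm : IsLeast {s : ℤ | ∃ k a b, A i k = some a ∧ B k j = some b ∧ s = a + b} m) :
    IsLeast {c : ℤ |
        Reaches (layerWeight A B u) (Sum.inl i) (Sum.inr (Sum.inr j)) c}
      (m + 2 * u) := by
  obtain ⟨⟨k0, a0, b0, hA0, hB0, hm0⟩, hlb⟩ := hm
  obtain ⟨ha0, ha0'⟩ := hA i k0 a0 hA0
  obtain ⟨hb0, hb0'⟩ := hB k0 j b0 hB0
  have hm_lt : m < 2 * u := by
    have := hlb ⟨k0, a0, b0, hA0, hB0, rfl⟩
    linarith
  have hm_nonneg : 0 ≤ m := by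
    obtain ⟨ha, -⟩ := hA i k0 a0 hA0
    obtain ⟨hb, -⟩ := hB k0 j b0 hB0
    linarith
  constructor
  · -- membership: the two-step walk i → k0 → j
    have h1 : layerWeight A B u (Sum.inl i) (Sum.inr (Sum.inl k0)) = some (a0 + u) := by
      simp [layerWeight, hA0]
    have h2 : layerWeight A B u (Sum.inr (Sum.inl k0)) (Sum.inr (Sum.inr j)) =
        some (b0 + u) := by
      simp [layerWeight, hB0]
    have hw : Reaches (layerWeight A B u) (Sum.inl i) (Sum.inr (Sum.inr j))
        ((a0 + u) + ((b0 + u) + 0)) :=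
      Reaches.step h1 (Reaches.step h2 (Reaches.refl _))
    have : (a0 + u) + ((b0 + u) + 0) = m + 2 * u := by rw [hm0]; ring
    rwa [this] at hw
  · -- lower bound
    intro c hc
    have key : ∀ (v t : Fin n ⊕ Fin n ⊕ Fin n) (c : ℤ),
        Reaches (layerWeight A B u) v t c → t = Sum.inr (Sum.inr j) →
        (match v with
          | Sum.inl i' => 2 * u ≤ c ∧ (i' = i → m + 2 * u ≤ c)
          | Sum.inr (Sum.inl k) => u ≤ c ∧ ∀ a, A i k = some a → m - a + u ≤ c
          | Sum.inr (Sum.inr j') => (j' = j ∧ c = 0) ∨ 2 * u ≤ c) := by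
      intro v t c h
      induction h with
      | refl v =>
        intro ht
        subst ht
        exact Or.inl ⟨rfl, rfl⟩
      | step hw hr ih =>
        rename_i a b v c d
        intro ht
        have IH := ih ht
        rcases a with i' | k' | j'
        · -- from an I-vertex: edge must go to a K-vertex
          rcases b with i2 | k2 | j2 <;> simp [layerWeight] at hw
          obtain ⟨x, hx, hxc⟩ := hw
          obtain ⟨hx0, hx1⟩ := hA i' k2 x hx
          obtain ⟨hd, hd2⟩ := IH
          constructor
          · linarith
          · intro hii
            subst hii
            have := hd2 x hx
            linarith
        · -- from a K-vertex
          rcases b with i2 | k2 | j2 <;> simp [layerWeight] at hw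
          · -- to an I-vertex
            obtain ⟨x, hx, hxc⟩ := hw
            obtain ⟨hx0, hx1⟩ := hA i2 k' x hx
            obtain ⟨hd, -⟩ := IH
            constructor
            · linarith
            · intro a ha
              obtain ⟨ha1, ha2⟩ := hA i k' a ha
              linarith
          · -- to a J-vertex
            obtain ⟨x, hx, hxc⟩ := hw
            obtain ⟨hx0, hx1⟩ := hB k' j2 x hx
            rcases IH with ⟨hj, hd0⟩ | hd
            · subst hj hd0
              constructor
              · linarith
              · intro a ha
                have := hlb ⟨k', a, x, ha, hx, rfl⟩
                linarith
            · constructor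
              · linarith
              · intro a ha
                obtain ⟨ha1, ha2⟩ := hA i k' a ha
                linarith
        · -- from a J-vertex: edge must go to a K-vertex
          rcases b with i2 | k2 | j2 <;> simp [layerWeight] at hw
          obtain ⟨x, hx, hxc⟩ := hw
          obtain ⟨hx0, hx1⟩ := hB k2 j' x hx
          obtain ⟨hd, -⟩ := IH
          right
          linarith
    have := key (Sum.inl i) (Sum.inr (Sum.inr j)) c hc rfl
    exact this.2 rfl
end
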